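/- arXiv:2106.04782 — 2 statements merged into one kernel-verified Lean document; each statement's English description precedes it below -/
import Mathlib

section
/- Let C ⊆ ℝ² be the interior of a strictly convex body and let P be a Borel probability distribution on ℝ² such that P(bd(x+C)) = 0 for every x ∈ ℝ². If X₁, …, X_n are independent random points each distributed according to P, then almost surely no three of the points X₁, …, X_n lie on the boundary of a common translate of C (i.e., the sample is in general position relative to C almost surely). -/
open MeasureTheory

/-- The translate `x + C` of a set `C ⊆ ℝ²` by a vector `x`. -/
def translateSet (x : ℝ × ℝ) (C : Set (ℝ × ℝ)) : Set (ℝ × ℝ) :=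
  (fun y => x + y) '' C

/-!
Fix a nonzero vector `d`. A boundary chord `[u, u + d]` of a strictly convex plane body `K`
is the whole intersection of `K` with its line, so a third parallel chord `[v, v + d]` lying
between two others is impossible: the convex hull of the outer two meets the line of `v` in a
translate `[m, m + d]` with `m` in the interior, and `[m, m + d] ⊆ [v, v + d]` forces `m = v`.
Hence two distinct points lie on the boundaries of only finitely many translates of `K`, so
given them the third point lies in a finite union of null sets. Covering a point by a
translate of the boundary shows that `P` has no atoms, and Fubini makes every triple of
sample indices a null event.
-/

open ProbabilityTheory Set

theorem mem_translateSet {x p : ℝ × ℝ} {C : Set (ℝ × ℝ)} :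
    p ∈ translateSet x C ↔ p - x ∈ C := by
  simp [translateSet, neg_add_eq_sub]

theorem frontier_translateSet (x : ℝ × ℝ) (C : Set (ℝ × ℝ)) :
    frontier (translateSet x C) = translateSet x (frontier C) :=
  ((Homeomorph.addLeft x).image_frontier C).symm

theorem Convex.frontier_interior {E : Type*} [AddCommGroup E] [Module ℝ E] [TopologicalSpace E]
    [IsTopologicalAddGroup E] [ContinuousSMul ℝ E] {K : Set E} (hK : Convex ℝ K)
    (hKint : (interior K).Nonempty) : frontier (interior K) = frontier K := by
  rw [frontier, frontier, hK.closure_interior_eq_closure_of_nonempty_interior hKint,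
    interior_interior]

section StrictConvex

variable {E : Type*} [AddCommGroup E] [Module ℝ E] [TopologicalSpace E] {K : Set E}
  {a d : E} {s t r : ℝ}

theorem StrictConvex.add_smul_mem_interior (hK : StrictConvex ℝ K) (hd : d ≠ 0)
    (hs : a + s • d ∈ K) (hr : a + r • d ∈ K) (hst : s < t) (htr : t < r) :
    a + t • d ∈ interior K := by
  have hsr : a + s • d ≠ a + r • d := by
    rw [Ne, add_right_inj]
    exact (smul_left_injective ℝ hd).ne (hst.trans htr).ne
  have hmem := hK hs hr hsr (a := (r - t) / (r - s)) (b := (t - s) / (r - s))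
    (div_pos (by linarith) (by linarith)) (div_pos (by linarith) (by linarith))
    (by rw [← add_div, sub_add_sub_cancel, div_self (by linarith)])
  convert hmem using 1
  have : r - s ≠ 0 := by linarith
  match_scalars <;> field_simp <;> ring

theorem StrictConvex.mem_Icc_of_add_smul_mem (hK : StrictConvex ℝ K) (hKc : IsClosed K)
    (hd : d ≠ 0) (ha : a ∈ frontier K) (had : a + d ∈ frontier K) (ht : a + t • d ∈ K) :
    t ∈ Icc 0 1 := by
  have hadK : a + (1 : ℝ) • d ∈ K := by simpa using hKc.frontier_subset had
  have haK : a + (0 : ℝ) • d ∈ K := by simpa using hKc.frontier_subset ha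
  constructor
  · by_contra! hneg
    exact ha.2 (by simpa using hK.add_smul_mem_interior hd ht hadK hneg one_pos)
  · by_contra! hgt
    exact had.2 (by simpa using hK.add_smul_mem_interior hd haK ht one_pos hgt)

theorem StrictConvex.eq_zero_of_add_smul_mem (hK : StrictConvex ℝ K) (hKc : IsClosed K)
    (hd : d ≠ 0) (ha : a ∈ frontier K) (had : a + d ∈ frontier K) (ht : a + t • d ∈ K)
    (htd : a + t • d + d ∈ K) : t = 0 := by
  rw [show a + t • d + d = a + (t + 1) • d by module] at htd
  have h₀ := hK.mem_Icc_of_add_smul_mem hKc hd ha had ht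
  have h₁ := hK.mem_Icc_of_add_smul_mem hKc hd ha had htd
  linarith [h₀.1, h₁.2]

end StrictConvex

namespace Prod

/-- The cross product `p × d`; for `d ≠ 0` its level sets are the lines of direction `d`. -/
def cross (d p : ℝ × ℝ) : ℝ := p.1 * d.2 - p.2 * d.1

theorem cross_add_smul (d p q : ℝ × ℝ) (s t : ℝ) :
    cross d (s • p + t • q) = s * cross d p + t * cross d q := by
  simp only [cross, fst_add, snd_add, smul_fst, smul_snd, smul_eq_mul]
  ring

theorem exists_eq_add_smul_of_cross_eq {d p q : ℝ × ℝ} (hd : d ≠ 0)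
    (h : cross d p = cross d q) : ∃ c : ℝ, q = p + c • d := by
  unfold cross at h
  rcases eq_or_ne d.1 0 with h1 | h1
  · have h2 : d.2 ≠ 0 := fun h2 => hd (Prod.ext h1 h2)
    refine ⟨(q.2 - p.2) / d.2, Prod.ext ?_ ?_⟩
    · rw [h1] at h
      simp only [fst_add, smul_fst, smul_eq_mul, h1, mul_zero, add_zero]
      exact mul_right_cancel₀ h2 (by linarith)
    · simp only [snd_add, smul_snd, smul_eq_mul]
      field_simp
      ring
  · refine ⟨(q.1 - p.1) / d.1, Prod.ext ?_ ?_⟩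
    · simp only [fst_add, smul_fst, smul_eq_mul]
      field_simp
      ring
    · simp only [snd_add, smul_snd, smul_eq_mul]
      field_simp
      linear_combination h

end Prod

open Prod (cross)

section Plane

variable {K : Set (ℝ × ℝ)} {d : ℝ × ℝ}

theorem StrictConvex.not_cross_lt_lt (hK : StrictConvex ℝ K) (hKc : IsClosed K) (hd : d ≠ 0)
    {u v w : ℝ × ℝ} (hu : u ∈ K) (hud : u + d ∈ K) (hw : w ∈ K) (hwd : w + d ∈ K)
    (hv : v ∈ frontier K) (hvd : v + d ∈ frontier K)
    (huv : cross d u < cross d v) (hvw : cross d v < cross d w) : False := by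
  set s := (cross d v - cross d u) / (cross d w - cross d u)
  have hs₀ : 0 < s := div_pos (by linarith) (by linarith)
  have hs₁ : s < 1 := (div_lt_one (by linarith)).2 (by linarith)
  have huw : u ≠ w := by rintro rfl; linarith
  have hm : (1 - s) • u + s • w ∈ interior K := hK hu hw huw (by linarith) hs₀ (by ring)
  have hmd : (1 - s) • u + s • w + d ∈ K := by
    convert hK.convex hud hwd (by linarith : 0 ≤ 1 - s) hs₀.le (by ring) using 1
    module
  have hcross : cross d v = cross d ((1 - s) • u + s • w) := by
    have hs : s * (cross d w - cross d u) = cross d v - cross d u :=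
      div_mul_cancel₀ _ (by linarith)
    rw [Prod.cross_add_smul]
    linear_combination -hs
  obtain ⟨c, hc⟩ := Prod.exists_eq_add_smul_of_cross_eq hd hcross
  rw [hc] at hm hmd
  obtain rfl := hK.eq_zero_of_add_smul_mem hKc hd hv hvd (interior_subset hm) hmd
  exact hv.2 (by simpa using hm)

theorem StrictConvex.finite_setOf_mem_frontier_add_mem_frontier (hK : StrictConvex ℝ K)
    (hKc : IsClosed K) (hd : d ≠ 0) :
    {u | u ∈ frontier K ∧ u + d ∈ frontier K}.Finite := by
  have hF : frontier K ⊆ K := hKc.frontier_subset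
  have hinj : InjOn (cross d) {u | u ∈ frontier K ∧ u + d ∈ frontier K} := by
    rintro u ⟨hu, hud⟩ v ⟨hv, hvd⟩ huv
    obtain ⟨c, rfl⟩ := Prod.exists_eq_add_smul_of_cross_eq hd huv
    obtain rfl := hK.eq_zero_of_add_smul_mem hKc hd hu hud (hF hv) (hF hvd)
    simp
  refine Finite.of_finite_image (finite_of_forall_not_lt_lt ?_) hinj
  rintro _ ⟨u, ⟨hu, hud⟩, rfl⟩ _ ⟨v, ⟨hv, hvd⟩, rfl⟩ _ ⟨w, ⟨hw, hwd⟩, rfl⟩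
  exact hK.not_cross_lt_lt hKc hd (hF hu) (hF hud) (hF hw) (hF hwd) hv hvd

end Plane

section Measure

variable {α : Type*} [MeasurableSpace α]

theorem map_pi_eval_triple {ι : Type*} [Fintype ι] (μ : Measure α) [IsProbabilityMeasure μ]
    {i j l : ι} (hij : i ≠ j) (hil : i ≠ l) (hjl : j ≠ l) :
    (Measure.pi fun _ : ι => μ).map (fun ω => (ω i, ω j, ω l)) = μ.prod (μ.prod μ) := by
  have hind : iIndepFun (fun k (ω : ι → α) => ω k) (Measure.pi fun _ : ι => μ) :=
    iIndepFun_pi (X := fun _ x => x) fun _ => aemeasurable_id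
  have hmeas : ∀ k, Measurable fun ω : ι → α => ω k := measurable_pi_apply
  have hi_jl : IndepFun (fun ω : ι → α => ω i) (fun ω => (ω j, ω l)) (Measure.pi fun _ => μ) :=
    (hind.indepFun_prodMk hmeas j l i hij.symm hil.symm).symm
  rw [(indepFun_iff_map_prod_eq_prod_map_map (hmeas i).aemeasurable
      ((hmeas j).prodMk (hmeas l)).aemeasurable).1 hi_jl,
    (indepFun_iff_map_prod_eq_prod_map_map (hmeas j).aemeasurable (hmeas l).aemeasurable).1
      (hind.indepFun hjl)]
  simp only [(measurePreserving_eval (fun _ : ι => μ) _).map_eq]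

theorem measure_pi_setOf_exists_triple_eq_zero {ι : Type*} [Fintype ι] (μ : Measure α)
    [IsProbabilityMeasure μ] {T : Set (α × α × α)} (hT : MeasurableSet T)
    (hμT : μ.prod (μ.prod μ) T = 0) :
    Measure.pi (fun _ : ι => μ)
      {ω | ∃ i j l, i ≠ j ∧ i ≠ l ∧ j ≠ l ∧ (ω i, ω j, ω l) ∈ T} = 0 := by
  have hunion : {ω : ι → α | ∃ i j l, i ≠ j ∧ i ≠ l ∧ j ≠ l ∧ (ω i, ω j, ω l) ∈ T} =
      ⋃ (i) (j) (l) (_ : i ≠ j ∧ i ≠ l ∧ j ≠ l), (fun ω => (ω i, ω j, ω l)) ⁻¹' T := by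
    ext; simp only [mem_ofPred_eq, mem_iUnion, mem_preimage, exists_prop, and_assoc]
  rw [hunion]
  refine measure_iUnion_null fun i => measure_iUnion_null fun j => measure_iUnion_null
    fun l => measure_iUnion_null fun ⟨hij, hil, hjl⟩ => ?_
  rwa [← Measure.map_apply (by fun_prop) hT, map_pi_eval_triple μ hij hil hjl]

theorem measure_prod_prod_eq_zero_of_forall_ne {μ : Measure α} [SFinite μ]
    [NullSingletonClass μ] {T : Set (α × α × α)} (hT : MeasurableSet T)
    (h : ∀ y z, y ≠ z → μ {w | (y, z, w) ∈ T} = 0) : μ.prod (μ.prod μ) T = 0 := by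
  refine (Measure.measure_prod_null hT).2 (ae_of_all _ fun y => ?_)
  refine (Measure.measure_prod_null (measurable_prodMk_left hT)).2 ?_
  filter_upwards [Measure.ae_ne μ y] with z hz using h y z hz.symm

end Measure

section Translates

variable {E : Type*} [AddCommGroup E]

def translateTriples (F : Set E) : Set (E × E × E) :=
  {t | ∃ x, t.1 - x ∈ F ∧ t.2.1 - x ∈ F ∧ t.2.2 - x ∈ F}

theorem translateTriples_eq_preimage (F : Set E) :
    translateTriples F = (fun t : E × E × E => (t.2.1 - t.1, t.2.2 - t.1)) ⁻¹'
      ((fun a : E × E × E => (a.2.1 - a.1, a.2.2 - a.1)) '' F ×ˢ F ×ˢ F) := by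
  ext ⟨p, q, r⟩
  simp only [translateTriples, mem_ofPred_eq, mem_preimage, mem_image, mem_prod, Prod.mk.injEq]
  constructor
  · rintro ⟨x, hp, hq, hr⟩
    exact ⟨(p - x, q - x, r - x), ⟨hp, hq, hr⟩, sub_sub_sub_cancel_right ..,
      sub_sub_sub_cancel_right ..⟩
  · rintro ⟨⟨a, b, c⟩, ⟨ha, hb, hc⟩, hqp, hrp⟩
    refine ⟨p - a, by rwa [sub_sub_cancel], ?_, ?_⟩
    · convert hb using 1; rw [sub_eq_iff_eq_add] at hqp; rw [hqp]; abel
    · convert hc using 1; rw [sub_eq_iff_eq_add] at hrp; rw [hrp]; abel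

theorem isClosed_translateTriples [TopologicalSpace E] [IsTopologicalAddGroup E] [T2Space E]
    {F : Set E} (hF : IsCompact F) : IsClosed (translateTriples F) := by
  rw [translateTriples_eq_preimage]
  exact ((hF.prod (hF.prod hF)).image (by fun_prop)).isClosed.preimage (by fun_prop)

end Translates

theorem StrictConvex.measure_setOf_mem_translateTriples_frontier_eq_zero {K : Set (ℝ × ℝ)}
    (hK : StrictConvex ℝ K) (hKc : IsClosed K) {μ : Measure (ℝ × ℝ)}
    (hμ : ∀ x, μ (translateSet x (frontier K)) = 0) {y z : ℝ × ℝ} (hyz : y ≠ z) :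
    μ {w | (y, z, w) ∈ translateTriples (frontier K)} = 0 := by
  have hcenters : {x | y - x ∈ frontier K ∧ z - x ∈ frontier K}.Finite := by
    convert (hK.finite_setOf_mem_frontier_add_mem_frontier hKc
      (sub_ne_zero.2 hyz.symm)).preimage (sub_right_injective (b := y)).injOn using 1
    ext x
    simp
  refine measure_mono_null ?_ ((measure_biUnion_null_iff hcenters.countable).2 fun x _ => hμ x)
  rintro w ⟨x, hy, hz, hw⟩
  exact mem_iUnion₂.2 ⟨x, ⟨hy, hz⟩, mem_translateSet.2 hw⟩

/-- Let `C` be the interior of a strictly convex body `K ⊆ ℝ²` and let `P` be a Borel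
probability measure on `ℝ²` giving measure `0` to the boundary of every translate of
`C`. Then, almost surely, no three of `n` independent `P`-distributed random points lie
on the boundary of a common translate of `C` (with the joint law of the sample being
the product measure). -/
theorem stmt10 (K : Set (ℝ × ℝ))
    (hKcomp : IsCompact K) (hKconv : Convex ℝ K) (hKint : (interior K).Nonempty)
    (hKstrict : StrictConvex ℝ K)
    (C : Set (ℝ × ℝ)) (hC : C = interior K)
    (P : Measure (ℝ × ℝ)) [IsProbabilityMeasure P]
    (hbd : ∀ x : ℝ × ℝ, P (frontier (translateSet x C)) = 0)
    (n : ℕ) :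
    (Measure.pi fun _ : Fin n => P)
      {ω : Fin n → ℝ × ℝ | ∃ (x : ℝ × ℝ) (i j l : Fin n), i ≠ j ∧ i ≠ l ∧ j ≠ l ∧
        ω i ∈ frontier (translateSet x C) ∧ ω j ∈ frontier (translateSet x C) ∧
        ω l ∈ frontier (translateSet x C)} = 0 := by
  have hKc := hKcomp.isClosed
  have hfrontier : ∀ x, frontier (translateSet x C) = translateSet x (frontier K) := fun x => by
    rw [hC, frontier_translateSet, hKconv.frontier_interior hKint]
  have hnull : ∀ x, P (translateSet x (frontier K)) = 0 := fun x => hfrontier x ▸ hbd x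
  obtain ⟨q, hq⟩ := nonempty_frontier_iff.2 ⟨hKint.mono interior_subset, hKcomp.ne_univ⟩
  have : NullSingletonClass P := ⟨fun p => measure_mono_null
    (fun w hw => by rwa [mem_singleton_iff.1 hw, mem_translateSet, sub_sub_cancel]) (hnull (p - q))⟩
  have hT : MeasurableSet (translateTriples (frontier K)) :=
    (isClosed_translateTriples (hKcomp.of_isClosed_subset isClosed_frontier
      hKc.frontier_subset)).measurableSet
  refine measure_mono_null ?_ (measure_pi_setOf_exists_triple_eq_zero P hT
    (measure_prod_prod_eq_zero_of_forall_ne hT fun y z hyz =>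
      hKstrict.measure_setOf_mem_translateTriples_frontier_eq_zero hKc hnull hyz))
  rintro ω ⟨x, i, j, l, hij, hil, hjl, hi, hj, hl⟩
  simp only [hfrontier, mem_translateSet] at hi hj hl
  exact ⟨i, j, l, hij, hil, hjl, x, hi, hj, hl⟩
end

section
/- Let C ⊆ ℝ² be the interior of a convex body and let A ⊆ ℝ² be a compact set with 2C ⊆ A (where 2C = {2c : c ∈ C}). Let X be a set of n ≥ 2 independent points, each uniformly distributed in A, and let t > 0. Then there is a constant γ > 0, depending only on A, C and t, such that with probability at least 1 − n^{−t}, |{X ∩ (x+C) : x ∈ ℝ², x+C ⊆ A, X ∩ bd(x+C) = ∅}| ≥ γ·(n/log n)². -/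
open MeasureTheory
open scoped ENNReal

/-- The uniform probability distribution on a compact set `A ⊆ ℝ²`:
`B ↦ area (B ∩ A) / area A`. -/
noncomputable def uniformOn (A : Set (ℝ × ℝ)) : Measure (ℝ × ℝ) :=
  (volume A)⁻¹ • volume.restrict A

/-- The number of subsets of the point set `S ⊆ ℝ²` induced by translates of `C` that
are contained in `A` and whose boundary misses `S`. -/
noncomputable def rangeCountIn (C A S : Set (ℝ × ℝ)) : ℕ :=
  Set.ncard {T : Set (ℝ × ℝ) | ∃ x : ℝ × ℝ, translateSet x C ⊆ A ∧
    S ∩ frontier (translateSet x C) = ∅ ∧ T = S ∩ translateSet x C}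


open scoped Pointwise

/-!
Fix a square `Metric.ball p r ⊆ C` (balls of `ℝ × ℝ` are squares) and take the translates `x + C`
for `x` in an `m × m` grid of mesh `δ = r / m` in that square, with `m ≍ n / log n`; they lie in
`A` because `2C ⊆ A`. For distinct grid points `x, x'`, put `v = x' - x`: after a rotation taking
`v` to the vertical, each vertical line through a square inscribed in `C` meets `C \ (v + C)` in a
segment of length at least `min |v| r`, so `(x + C) \ (x' + C)` has area at least `r δ`. It
therefore misses all `n` sample points with probability at most
`exp (-n r δ / area A) ≤ n ^ (-(t + 4))`, and a union bound over the fewer than `n ^ 4` pairs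
shows that with probability at least `1 - n ^ (-t)` the `m²` translates cut out pairwise distinct
subsets of the sample. Their boundaries almost surely miss the sample, since boundaries of convex
sets are null.
-/

lemma Real.ofReal_min_le_volume_diff_vadd {J : Set ℝ} (hJ : J.OrdConnected) (hJb : BddBelow J)
    {a b : ℝ} (hab : a < b) (habJ : Set.Ioo a b ⊆ J) (h : ℝ) :
    ENNReal.ofReal (min h (b - a)) ≤ volume (J \ (h +ᵥ J)) := by
  set c := sInf J
  have hca : c ≤ a := (csInf_le_csInf hJb (Set.nonempty_Ioo.2 hab) habJ).trans (csInf_Ioo hab).le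
  have hsub : Set.Ioo c (min (c + h) b) ⊆ J \ (h +ᵥ J) := by
    rintro y ⟨hcy, hyb⟩
    obtain ⟨j, hj, hjy⟩ := exists_lt_of_csInf_lt ((Set.nonempty_Ioo.2 hab).mono habJ) hcy
    obtain ⟨z, hyz, hzb⟩ := exists_between (max_lt hab (hyb.trans_le (min_le_right _ _)))
    refine ⟨hJ.out hj (habJ ⟨(le_max_left _ _).trans_lt hyz, hzb⟩) ⟨hjy.le, ?_⟩, fun hyJ => ?_⟩
    · exact (le_max_right _ _).trans hyz.le
    · rw [Set.mem_vadd_set_iff_neg_vadd_mem, vadd_eq_add] at hyJ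
      have := csInf_le hJb hyJ
      linarith [hyb.trans_le (min_le_left _ _)]
  calc ENNReal.ofReal (min h (b - a)) ≤ volume (Set.Ioo c (min (c + h) b)) := by
        rw [Real.volume_Ioo, ← min_sub_sub_right, add_sub_cancel_left]
        exact ENNReal.ofReal_le_ofReal (min_le_min le_rfl (by linarith))
    _ ≤ volume (J \ (h +ᵥ J)) := measure_mono hsub

lemma ofReal_le_volume_diff_vadd_vertical {C : Set (ℝ × ℝ)} (hconv : Convex ℝ C)
    (hmeas : MeasurableSet C) (hbdd : Bornology.IsBounded C) {q : ℝ × ℝ} {R : ℝ} (hR : 0 < R)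
    (hball : Metric.ball q R ⊆ C) (h : ℝ) :
    ENNReal.ofReal (2 * R * min h (2 * R)) ≤ volume (C \ (((0 : ℝ), h) +ᵥ C)) := by
  set S := C \ (((0 : ℝ), h) +ᵥ C)
  have hS : MeasurableSet S := hmeas.diff (hmeas.const_vadd _)
  have hslice : ∀ x ∈ Metric.ball q.1 R,
      ENNReal.ofReal (min h (2 * R)) ≤ volume (Prod.mk x ⁻¹' S) := by
    intro x hx
    have hfiber : Prod.mk x ⁻¹' S = Prod.mk x ⁻¹' C \ (h +ᵥ Prod.mk x ⁻¹' C) := by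
      ext y
      simp [S, Set.mem_vadd_set_iff_neg_vadd_mem]
    have hJ : Convex ℝ (Prod.mk x ⁻¹' C) :=
      hconv.affine_preimage ((AffineMap.const ℝ ℝ x).prod (AffineMap.id ℝ ℝ))
    have hJb : BddBelow (Prod.mk x ⁻¹' C) :=
      hbdd.image_snd.bddBelow.mono fun y hy => show y ∈ Prod.snd '' C from ⟨_, hy, rfl⟩
    have hIoo : Set.Ioo (q.2 - R) (q.2 + R) ⊆ Prod.mk x ⁻¹' C := fun y hy =>
      hball (by rw [← ball_prod_same]; exact ⟨hx, by rwa [Real.ball_eq_Ioo]⟩)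
    have := Real.ofReal_min_le_volume_diff_vadd hJ.ordConnected hJb (by linarith) hIoo h
    rwa [hfiber, ← show q.2 + R - (q.2 - R) = 2 * R by ring]
  calc ENNReal.ofReal (2 * R * min h (2 * R))
      = ∫⁻ _ in Metric.ball q.1 R, ENNReal.ofReal (min h (2 * R)) := by
        rw [setLIntegral_const, Real.volume_ball, ENNReal.ofReal_mul (by positivity), mul_comm]
    _ ≤ ∫⁻ x in Metric.ball q.1 R, volume (Prod.mk x ⁻¹' S) :=
        setLIntegral_mono' measurableSet_ball hslice
    _ ≤ ∫⁻ x, volume (Prod.mk x ⁻¹' S) := setLIntegral_le_lintegral _ _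
    _ = volume S := by rw [Measure.volume_eq_prod, Measure.prod_apply hS]

/-- Multiplication by `|v|` composed with the rotation taking `v` to the positive vertical axis. -/
def scaledRotation (v : ℝ × ℝ) : (ℝ × ℝ) →ₗ[ℝ] ℝ × ℝ where
  toFun w := (v.2 * w.1 - v.1 * w.2, v.1 * w.1 + v.2 * w.2)
  map_add' w w' := by ext <;> dsimp <;> ring
  map_smul' c w := by ext <;> dsimp <;> ring

lemma scaledRotation_apply (v w : ℝ × ℝ) :
    scaledRotation v w = (v.2 * w.1 - v.1 * w.2, v.1 * w.1 + v.2 * w.2) := rfl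

lemma scaledRotation_self (v : ℝ × ℝ) : scaledRotation v v = (0, v.1 ^ 2 + v.2 ^ 2) := by
  ext <;> simp only [scaledRotation_apply] <;> ring

lemma det_scaledRotation (v : ℝ × ℝ) : LinearMap.det (scaledRotation v) = v.1 ^ 2 + v.2 ^ 2 := by
  rw [← LinearMap.det_toMatrix (Module.Basis.finTwoProd ℝ), Matrix.det_fin_two]
  simp [LinearMap.toMatrix_apply, scaledRotation_apply]
  ring

lemma scaledRotation_sq_add_sq (v w : ℝ × ℝ) :
    (scaledRotation v w).1 ^ 2 + (scaledRotation v w).2 ^ 2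
      = (v.1 ^ 2 + v.2 ^ 2) * (w.1 ^ 2 + w.2 ^ 2) := by
  simp only [scaledRotation_apply]
  ring

lemma Prod.mem_ball_of_sq_add_sq_lt {q w : ℝ × ℝ} {R : ℝ} (hR : 0 ≤ R)
    (h : (w.1 - q.1) ^ 2 + (w.2 - q.2) ^ 2 < R ^ 2) : w ∈ Metric.ball q R := by
  rw [Metric.mem_ball, Prod.dist_eq, Real.dist_eq, Real.dist_eq, max_lt_iff]
  exact ⟨abs_lt_of_sq_lt_sq (by nlinarith) hR, abs_lt_of_sq_lt_sq (by nlinarith) hR⟩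

lemma Prod.sq_add_sq_lt_of_mem_ball {q w : ℝ × ℝ} {R : ℝ} (h : w ∈ Metric.ball q R) :
    (w.1 - q.1) ^ 2 + (w.2 - q.2) ^ 2 < 2 * R ^ 2 := by
  rw [Metric.mem_ball, Prod.dist_eq, Real.dist_eq, Real.dist_eq, max_lt_iff] at h
  have h1 := sq_lt_sq' (neg_lt_of_abs_lt h.1) (lt_of_abs_lt h.1)
  have h2 := sq_lt_sq' (neg_lt_of_abs_lt h.2) (lt_of_abs_lt h.2)
  linarith

lemma ofReal_mul_le_volume_diff_vadd {C : Set (ℝ × ℝ)} (hconv : Convex ℝ C) (hopen : IsOpen C)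
    (hbdd : Bornology.IsBounded C) {p : ℝ × ℝ} {r : ℝ} (hr : 0 < r) (hball : Metric.ball p r ⊆ C)
    {v : ℝ × ℝ} {l : ℝ} (hl : 0 < l) (hlv : l ^ 2 ≤ v.1 ^ 2 + v.2 ^ 2) (hlr : l ≤ r) :
    ENNReal.ofReal (r * l) ≤ volume (C \ (v +ᵥ C)) := by
  set N := v.1 ^ 2 + v.2 ^ 2
  have hN : 0 < N := lt_of_lt_of_le (by positivity) hlv
  set L := √N
  have hL : 0 < L := Real.sqrt_pos.2 hN
  have hLL : L * L = N := Real.mul_self_sqrt hN.le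
  have hlL : l ≤ L := (Real.le_sqrt hl.le hN.le).2 hlv
  set e := (scaledRotation v).equivOfDetNeZero (by rw [det_scaledRotation]; exact hN.ne')
  have he : ⇑e = scaledRotation v := rfl
  have hball' : Metric.ball (e p) (r * L / 2) ⊆ e '' C := by
    intro w hw
    refine ⟨e.symm w, hball (Prod.mem_ball_of_sq_add_sq_lt hr.le ?_), e.apply_symm_apply w⟩
    have hw' := Prod.sq_add_sq_lt_of_mem_ball hw
    have hrot := scaledRotation_sq_add_sq v (e.symm w - p)
    rw [← he, map_sub, e.apply_symm_apply] at hrot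
    simp only [Prod.fst_sub, Prod.snd_sub] at hrot
    have : N * ((e.symm w).1 - p.1) ^ 2 + N * ((e.symm w).2 - p.2) ^ 2 < N * r ^ 2 := by
      nlinarith
    nlinarith
  have himage : e '' (C \ (v +ᵥ C)) = e '' C \ (((0 : ℝ), N) +ᵥ e '' C) := by
    rw [Set.image_sdiff e.injective, Set.image_vadd_distrib, he, scaledRotation_self]
  have hvol : volume (e '' (C \ (v +ᵥ C))) = ENNReal.ofReal N * volume (C \ (v +ᵥ C)) := by
    rw [he, Measure.addHaar_image_linearMap, det_scaledRotation, abs_of_pos hN]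
  have hslab := ofReal_le_volume_diff_vadd_vertical (hconv.linear_image e.toLinearMap)
    (e.toContinuousLinearEquiv.isOpenMap C hopen).measurableSet
    ((e.toContinuousLinearEquiv : (ℝ × ℝ) →L[ℝ] ℝ × ℝ).lipschitz.isBounded_image hbdd)
    (by positivity) hball' N
  rw [← ENNReal.mul_le_mul_iff_right (ENNReal.ofReal_pos.2 hN).ne' ENNReal.ofReal_ne_top, ← hvol,
    himage, ← ENNReal.ofReal_mul hN.le]
  refine le_trans (ENNReal.ofReal_le_ofReal ?_) hslab
  have hmin : L * l ≤ min N (2 * (r * L / 2)) := le_min (by nlinarith) (by nlinarith)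
  calc N * (r * l) = r * L * (L * l) := by rw [← hLL]; ring
    _ ≤ r * L * min N (2 * (r * L / 2)) := by gcongr
    _ = 2 * (r * L / 2) * min N (2 * (r * L / 2)) := by ring

def squareGrid (p : ℝ × ℝ) (δ : ℝ) (m : ℕ) (q : Fin m × Fin m) : ℝ × ℝ :=
  (p.1 + q.1 * δ, p.2 + q.2 * δ)

lemma squareGrid_mem_ball {p : ℝ × ℝ} {δ r : ℝ} {m : ℕ} (hδ : 0 ≤ δ) (hr : 0 < r)
    (hmδ : m * δ ≤ r) (q : Fin m × Fin m) : squareGrid p δ m q ∈ Metric.ball p r := by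
  have hcoord : ∀ k : Fin m, |(k : ℝ) * δ| < r := fun k => by
    rw [abs_of_nonneg (by positivity)]
    rcases hδ.eq_or_lt with rfl | hδ
    · simpa using hr
    · exact (mul_lt_mul_of_pos_right (by exact_mod_cast k.isLt) hδ).trans_le hmδ
  rw [Metric.mem_ball, Prod.dist_eq, Real.dist_eq, Real.dist_eq, max_lt_iff]
  simp only [squareGrid, add_sub_cancel_left]
  exact ⟨hcoord q.1, hcoord q.2⟩

lemma one_le_sq_sub_of_ne {m : ℕ} {i j : Fin m} (h : i ≠ j) : 1 ≤ ((i : ℝ) - j) ^ 2 := by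
  rcases Fin.lt_or_lt_of_ne h with h | h
  · have : (i : ℝ) + 1 ≤ j := by exact_mod_cast h
    nlinarith
  · have : (j : ℝ) + 1 ≤ i := by exact_mod_cast h
    nlinarith

lemma sq_le_squareGrid_sub {p : ℝ × ℝ} {δ : ℝ} {m : ℕ} {q q' : Fin m × Fin m} (h : q ≠ q') :
    δ ^ 2 ≤ (squareGrid p δ m q' - squareGrid p δ m q).1 ^ 2
      + (squareGrid p δ m q' - squareGrid p δ m q).2 ^ 2 := by
  simp only [squareGrid, Prod.fst_sub, Prod.snd_sub]
  have key : 1 ≤ ((q'.1 : ℝ) - q.1) ^ 2 ∨ 1 ≤ ((q'.2 : ℝ) - q.2) ^ 2 := by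
    by_cases h1 : q.1 = q'.1
    · exact Or.inr (one_le_sq_sub_of_ne fun h2 => h (Prod.ext h1 h2.symm))
    · exact Or.inl (one_le_sq_sub_of_ne (Ne.symm h1))
  rcases key with key | key <;> nlinarith [sq_nonneg δ, sq_nonneg (((q'.1 : ℝ) - q.1) * δ),
    sq_nonneg (((q'.2 : ℝ) - q.2) * δ)]

lemma translateSet_eq_vadd (x : ℝ × ℝ) (C : Set (ℝ × ℝ)) : translateSet x C = x +ᵥ C := rfl

lemma volume_translateSet_diff (x y : ℝ × ℝ) (C : Set (ℝ × ℝ)) :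
    volume (translateSet x C \ translateSet y C) = volume (C \ ((y - x) +ᵥ C)) := by
  rw [translateSet_eq_vadd, translateSet_eq_vadd, ← measure_vadd volume x (C \ _),
    Set.vadd_set_sdiff, vadd_vadd, add_sub_cancel]

lemma ofReal_mul_le_volume_squareGrid_diff {C : Set (ℝ × ℝ)} (hconv : Convex ℝ C)
    (hopen : IsOpen C) (hbdd : Bornology.IsBounded C) {p : ℝ × ℝ} {r : ℝ} (hr : 0 < r)
    (hball : Metric.ball p r ⊆ C) {δ : ℝ} (hδ : 0 < δ) (hδr : δ ≤ r) {m : ℕ}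
    {q q' : Fin m × Fin m} (h : q ≠ q') :
    ENNReal.ofReal (r * δ) ≤
      volume (translateSet (squareGrid p δ m q) C \ translateSet (squareGrid p δ m q') C) := by
  rw [volume_translateSet_diff]
  exact ofReal_mul_le_volume_diff_vadd hconv hopen hbdd hr hball hδ (sq_le_squareGrid_sub h) hδr

lemma translateSet_subset_of_two_smul_image_subset {C A : Set (ℝ × ℝ)} (hconv : Convex ℝ C)
    (h2C : (fun c => (2 : ℝ) • c) '' C ⊆ A) {x : ℝ × ℝ} (hx : x ∈ C) : translateSet x C ⊆ A := by
  rintro _ ⟨c, hc, rfl⟩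
  refine h2C ⟨(2⁻¹ : ℝ) • x + (2⁻¹ : ℝ) • c,
    hconv hx hc (by norm_num) (by norm_num) (by norm_num), ?_⟩
  simp only [smul_add, smul_smul]
  norm_num

lemma isProbabilityMeasure_uniformOn {A : Set (ℝ × ℝ)} (h0 : volume A ≠ 0) (htop : volume A ≠ ⊤) :
    IsProbabilityMeasure (uniformOn A) :=
  ProbabilityTheory.cond_isProbabilityMeasure_of_finite h0 htop

lemma uniformOn_apply {A : Set (ℝ × ℝ)} (hA : MeasurableSet A) (s : Set (ℝ × ℝ)) :
    uniformOn A s = (volume A)⁻¹ * volume (A ∩ s) :=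
  ProbabilityTheory.cond_apply hA volume s

lemma ENNReal.one_sub_le_ofReal_exp_neg {a : ℝ} {s : ℝ≥0∞} (h : ENNReal.ofReal a ≤ s) :
    1 - s ≤ ENNReal.ofReal (Real.exp (-a)) := by
  rcases eq_top_or_lt_top s with rfl | hs
  · simp
  have ha := (ENNReal.ofReal_le_iff_le_toReal hs.ne).1 h
  rw [← ENNReal.ofReal_toReal hs.ne, ← ENNReal.ofReal_one,
    ← ENNReal.ofReal_sub _ ENNReal.toReal_nonneg]
  refine ENNReal.ofReal_le_ofReal ?_
  linarith [Real.add_one_le_exp (-s.toReal), Real.exp_le_exp.2 (neg_le_neg ha)]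

lemma measure_pi_forall_notMem_le {α ι : Type*} [MeasurableSpace α] [Fintype ι] (μ : Measure α)
    [IsProbabilityMeasure μ] {R : Set α} (hR : MeasurableSet R) {a : ℝ}
    (ha : ENNReal.ofReal a ≤ μ R) :
    (Measure.pi fun _ : ι => μ) {ω | ∀ i, ω i ∉ R}
      ≤ ENNReal.ofReal (Real.exp (-(Fintype.card ι * a))) := by
  have hset : {ω : ι → α | ∀ i, ω i ∉ R} = Set.univ.pi fun _ => Rᶜ := by
    ext ω
    simp [Set.mem_pi]
  rw [hset, Measure.pi_pi, Finset.prod_const, Finset.card_univ, prob_compl_eq_one_sub hR,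
    neg_mul_eq_mul_neg, Real.exp_nat_mul, ENNReal.ofReal_pow (Real.exp_nonneg _)]
  exact pow_le_pow_left₀ zero_le (ENNReal.one_sub_le_ofReal_exp_neg ha) _

lemma measure_pi_exists_mem_null {α ι : Type*} [MeasurableSpace α] [Fintype ι] (μ : Measure α)
    [SigmaFinite μ] {F : Set α} (hF : μ F = 0) :
    (Measure.pi fun _ : ι => μ) {ω | ∃ i, ω i ∈ F} = 0 := by
  rw [Set.ofPred_exists]
  exact measure_iUnion_null fun i => Measure.pi_eval_preimage_null _ hF

lemma ofReal_one_sub_le_measure {α : Type*} [MeasurableSpace α] (μ : Measure α)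
    [IsProbabilityMeasure μ] {E B : Set α} (hEB : Eᶜ ⊆ B) {x : ℝ} (hx : 0 ≤ x)
    (hB : μ B ≤ ENNReal.ofReal x) : ENNReal.ofReal (1 - x) ≤ μ E := by
  have hcover : 1 ≤ μ E + μ Eᶜ := by
    rw [← measure_univ (μ := μ), ← Set.union_compl_self E]
    exact measure_union_le _ _
  calc ENNReal.ofReal (1 - x) = 1 - ENNReal.ofReal x := by
        rw [ENNReal.ofReal_sub _ hx, ENNReal.ofReal_one]
    _ ≤ 1 - μ Eᶜ := tsub_le_tsub_left ((measure_mono hEB).trans hB) _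
    _ ≤ μ E := tsub_le_iff_right.2 hcover

lemma card_le_rangeCountIn {ι : Type*} [Finite ι] {C A S : Set (ℝ × ℝ)} (hS : S.Finite)
    (x : ι → ℝ × ℝ) (hxA : ∀ q, translateSet (x q) C ⊆ A)
    (hfr : ∀ q, S ∩ frontier (translateSet (x q) C) = ∅)
    (hinj : Function.Injective fun q => S ∩ translateSet (x q) C) :
    Nat.card ι ≤ rangeCountIn C A S := by
  rw [← Set.ncard_range_of_injective hinj]
  refine Set.ncard_le_ncard ?_ (hS.finite_subsets.subset ?_)
  · rintro _ ⟨q, rfl⟩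
    exact ⟨x q, hxA q, hfr q, rfl⟩
  · rintro _ ⟨y, -, -, rfl⟩
    exact Set.inter_subset_left

lemma measure_rangeCountIn_lt_card_le {ι : Type*} [Fintype ι] (μ : Measure (ℝ × ℝ))
    [IsProbabilityMeasure μ] {C A : Set (ℝ × ℝ)} (hC : MeasurableSet C) (x : ι → ℝ × ℝ)
    (hxA : ∀ q, translateSet (x q) C ⊆ A) (hfr : ∀ q, μ (frontier (translateSet (x q) C)) = 0)
    {a : ℝ} (hsep : ∀ q q', q ≠ q' →
      ENNReal.ofReal a ≤ μ (translateSet (x q) C \ translateSet (x q') C)) (n : ℕ) :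
    (Measure.pi fun _ : Fin n => μ) {ω | rangeCountIn C A (Set.range ω) < Fintype.card ι}
      ≤ Fintype.card ι ^ 2 * ENNReal.ofReal (Real.exp (-(n * a))) := by
  classical
  set D : ι × ι → Set (ℝ × ℝ) := fun z => translateSet (x z.1) C \ translateSet (x z.2) C
  have hbad : {ω : Fin n → ℝ × ℝ | rangeCountIn C A (Set.range ω) < Fintype.card ι} ⊆
      (⋃ z ∈ (Finset.univ : Finset ι).offDiag, {ω | ∀ i, ω i ∉ D z}) ∪
        ⋃ q, {ω | ∃ i, ω i ∈ frontier (translateSet (x q) C)} := by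
    intro ω (hω : rangeCountIn C A (Set.range ω) < Fintype.card ι)
    by_contra hgood
    simp only [Set.mem_union, Set.mem_iUnion, Set.mem_ofPred_eq, Finset.mem_offDiag,
      Finset.mem_univ, true_and, not_or, not_exists, not_forall, not_not] at hgood
    refine not_lt.2 ?_ hω
    rw [← Nat.card_eq_fintype_card]
    refine card_le_rangeCountIn (Set.finite_range ω) x hxA (fun q => ?_) fun q q' hqq' => ?_
    · exact Set.eq_empty_of_forall_notMem fun _ ⟨⟨i, hi⟩, hz⟩ => hgood.2 q i (hi ▸ hz)
    · by_contra hne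
      obtain ⟨i, hi⟩ := hgood.1 (q, q') hne
      have hmem : ω i ∈ Set.range ω ∩ translateSet (x q) C := ⟨⟨i, rfl⟩, hi.1⟩
      beta_reduce at hqq'
      rw [hqq'] at hmem
      exact hi.2 hmem.2
  have hcard : (Finset.univ : Finset ι).offDiag.card ≤ Fintype.card ι ^ 2 := by
    rw [Finset.offDiag_card, Finset.card_univ, sq]
    exact Nat.sub_le _ _
  calc _ ≤ _ := measure_mono hbad
    _ ≤ _ := measure_union_le _ _
    _ ≤ ∑ _z ∈ (Finset.univ : Finset ι).offDiag, ENNReal.ofReal (Real.exp (-(n * a))) + 0 := by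
      refine add_le_add ((measure_biUnion_finset_le _ _).trans (Finset.sum_le_sum fun z hz => ?_))
        (measure_iUnion_null fun q => measure_pi_exists_mem_null μ (hfr q)).le
      have hD : MeasurableSet (D z) := (hC.const_vadd (x z.1)).diff (hC.const_vadd (x z.2))
      simpa using measure_pi_forall_notMem_le (ι := Fin n) μ hD
        (hsep z.1 z.2 (Finset.mem_offDiag.1 hz).2.2)
    _ ≤ Fintype.card ι ^ 2 * ENNReal.ofReal (Real.exp (-(n * a))) := by
      rw [add_zero, Finset.sum_const, nsmul_eq_mul]
      gcongr
      exact_mod_cast hcard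

lemma uniformOn_null {A s : Set (ℝ × ℝ)} (hA : MeasurableSet A) (hs : volume s = 0) :
    uniformOn A s = 0 := by
  rw [uniformOn_apply hA, measure_mono_null Set.inter_subset_right hs, mul_zero]

lemma ofReal_le_uniformOn {A s : Set (ℝ × ℝ)} (hA : MeasurableSet A) (h0 : volume A ≠ 0)
    (htop : volume A ≠ ⊤) (hsA : s ⊆ A) {a : ℝ}
    (h : ENNReal.ofReal (a * (volume A).toReal) ≤ volume s) : ENNReal.ofReal a ≤ uniformOn A s := by
  rw [uniformOn_apply hA, Set.inter_eq_self_of_subset_right hsA, ← ENNReal.div_eq_inv_mul,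
    ENNReal.le_div_iff_mul_le (Or.inl h0) (Or.inl htop)]
  rwa [ENNReal.ofReal_mul' ENNReal.toReal_nonneg, ENNReal.ofReal_toReal htop] at h

lemma Fin.two_le_of_prod_ne {m : ℕ} {q q' : Fin m × Fin m} (h : q ≠ q') : 2 ≤ m := by
  by_contra! hm
  interval_cases m <;> exact h (Subsingleton.elim _ _)

lemma measure_rangeCountIn_lt_sq_le {C A : Set (ℝ × ℝ)} (hconv : Convex ℝ C) (hopen : IsOpen C)
    (hbdd : Bornology.IsBounded C) {p : ℝ × ℝ} {r : ℝ} (hr : 0 < r) (hball : Metric.ball p r ⊆ C)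
    (hCA : ∀ x ∈ C, translateSet x C ⊆ A) (hA : MeasurableSet A) (h0 : volume A ≠ 0)
    (htop : volume A ≠ ⊤) {m : ℕ} {a : ℝ} (ha : 2 ≤ m → a * (volume A).toReal ≤ r * (r / m))
    (n : ℕ) :
    (Measure.pi fun _ : Fin n => uniformOn A) {ω | rangeCountIn C A (Set.range ω) < m ^ 2}
      ≤ (m : ℝ≥0∞) ^ 4 * ENNReal.ofReal (Real.exp (-(n * a))) := by
  have := isProbabilityMeasure_uniformOn h0 htop
  have hmr : m * (r / m) ≤ r := by
    rcases m.eq_zero_or_pos with rfl | hm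
    · simpa using hr.le
    · rw [mul_div_cancel₀ _ (by positivity)]
  have hxA : ∀ q, translateSet (squareGrid p (r / m) m q) C ⊆ A := fun q =>
    hCA _ (hball (squareGrid_mem_ball (by positivity) hr hmr q))
  have hsep : ∀ q q', q ≠ q' → ENNReal.ofReal a ≤
      uniformOn A (translateSet (squareGrid p (r / m) m q) C \
        translateSet (squareGrid p (r / m) m q') C) := by
    intro q q' hne
    have hm : (2 : ℝ) ≤ m := by exact_mod_cast Fin.two_le_of_prod_ne hne
    refine ofReal_le_uniformOn hA h0 htop (Set.sdiff_subset.trans (hxA q)) ?_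
    refine (ENNReal.ofReal_le_ofReal (ha (Fin.two_le_of_prod_ne hne))).trans ?_
    exact ofReal_mul_le_volume_squareGrid_diff hconv hopen hbdd hr hball (by positivity)
      (div_le_self hr.le (by linarith)) hne
  have := measure_rangeCountIn_lt_card_le (uniformOn A) hopen.measurableSet _ hxA
    (fun q => uniformOn_null hA ((hconv.translate _).addHaar_frontier volume)) hsep n
  simpa [Fintype.card_prod, Fintype.card_fin, ← sq, ← pow_mul] using this

lemma half_le_max_one_floor (x : ℝ) : x / 2 ≤ (max 1 ⌊x⌋₊ : ℕ) := by
  have := Nat.lt_floor_add_one x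
  push_cast
  linarith [le_max_left (1 : ℝ) ⌊x⌋₊, le_max_right (1 : ℝ) ⌊x⌋₊]

lemma max_one_floor_le_of_two_le {x : ℝ} (h : 2 ≤ max 1 ⌊x⌋₊) : (max 1 ⌊x⌋₊ : ℕ) ≤ x := by
  have hfloor : 2 ≤ ⌊x⌋₊ := by omega
  rw [max_eq_right (by omega)]
  exact Nat.floor_le (Nat.floor_pos.1 (by omega) |>.trans' zero_le_one)

lemma max_one_floor_div_log_le {c : ℝ} (hc : c ≤ Real.log 2) {n : ℕ} (hn : 2 ≤ n) :
    max 1 ⌊c * n / Real.log n⌋₊ ≤ n := by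
  have hn2 : (2 : ℝ) ≤ n := by exact_mod_cast hn
  have hlog : 0 < Real.log n := Real.log_pos (by linarith)
  have hxn : c * n / Real.log n ≤ n := by
    rw [div_le_iff₀ hlog]
    nlinarith [Real.log_le_log two_pos hn2]
  by_cases h2 : 2 ≤ max 1 ⌊c * n / Real.log n⌋₊
  · exact_mod_cast (max_one_floor_le_of_two_le h2).trans hxn
  · omega

lemma mul_log_div_mul_le {b c r V : ℝ} (hb : 0 ≤ b) (hV : 0 ≤ V) (hc : c * (b * V) ≤ r ^ 2)
    {m n : ℕ} (hm : 0 < m) (hn : 1 < n) (hmc : (m : ℝ) ≤ c * n / Real.log n) :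
    b * Real.log n / n * V ≤ r * (r / m) := by
  have hlog : 0 < Real.log n := Real.log_pos (by exact_mod_cast hn)
  have hmc' : m * Real.log n ≤ c * n := (le_div_iff₀ hlog).1 hmc
  rw [mul_div_assoc', le_div_iff₀ (by positivity), div_mul_eq_mul_div, div_mul_eq_mul_div,
    div_le_iff₀ (by positivity)]
  nlinarith [mul_le_mul_of_nonneg_left hmc' (mul_nonneg hb hV),
    mul_le_mul_of_nonneg_right hc (Nat.cast_nonneg n)]

lemma natCast_pow_four_mul_ofReal_exp_le {m n : ℕ} (hmn : m ≤ n) (hn : 1 < n) (t : ℝ) :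
    (m : ℝ≥0∞) ^ 4 * ENNReal.ofReal (Real.exp (-(n * ((t + 4) * Real.log n / n))))
      ≤ ENNReal.ofReal ((n : ℝ) ^ (-t)) := by
  have hn0 : (0 : ℝ) < n := by positivity
  have hexp : Real.exp (-(n * ((t + 4) * Real.log n / n))) = (n : ℝ) ^ (-(t + 4)) := by
    rw [Real.rpow_def_of_pos hn0]
    field_simp
  rw [hexp, ← ENNReal.ofReal_natCast, ← ENNReal.ofReal_pow (by positivity),
    ← ENNReal.ofReal_mul (by positivity)]
  refine ENNReal.ofReal_le_ofReal ?_
  calc (m : ℝ) ^ 4 * (n : ℝ) ^ (-(t + 4)) ≤ (n : ℝ) ^ 4 * (n : ℝ) ^ (-(t + 4)) := by gcongr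
    _ = (n : ℝ) ^ (-t) := by
        rw [← Real.rpow_natCast, ← Real.rpow_add hn0]
        norm_num

lemma ofReal_one_sub_rpow_le_measure_rangeCountIn {C A : Set (ℝ × ℝ)} (hconv : Convex ℝ C)
    (hopen : IsOpen C) (hbdd : Bornology.IsBounded C) {p : ℝ × ℝ} {r : ℝ} (hr : 0 < r)
    (hball : Metric.ball p r ⊆ C) (hCA : ∀ x ∈ C, translateSet x C ⊆ A) (hA : MeasurableSet A)
    (h0 : volume A ≠ 0) (htop : volume A ≠ ⊤) {t c : ℝ} (ht : 0 < t) (hc0 : 0 < c)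
    (hc : c * ((t + 4) * (volume A).toReal) ≤ r ^ 2) (hc2 : c ≤ Real.log 2) {n : ℕ} (hn : 2 ≤ n) :
    ENNReal.ofReal (1 - (n : ℝ) ^ (-t)) ≤ (Measure.pi fun _ : Fin n => uniformOn A)
      {ω | (c / 2) ^ 2 * ((n : ℝ) / Real.log n) ^ 2 ≤ (rangeCountIn C A (Set.range ω) : ℝ)} := by
  have := isProbabilityMeasure_uniformOn h0 htop
  have hn1 : 1 < n := by omega
  -- `max 1` keeps one translate when `c n / log n < 1`, where the target count is below `1`.
  set m := max 1 ⌊c * n / Real.log n⌋₊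
  have ha : 2 ≤ m → (t + 4) * Real.log n / n * (volume A).toReal ≤ r * (r / m) := fun h2 =>
    mul_log_div_mul_le (by positivity) ENNReal.toReal_nonneg hc (by omega) hn1
      (max_one_floor_le_of_two_le h2)
  refine ofReal_one_sub_le_measure _ (B := {ω | rangeCountIn C A (Set.range ω) < m ^ 2})
    (fun ω hω => ?_) (by positivity)
    ((measure_rangeCountIn_lt_sq_le hconv hopen hbdd hr hball hCA hA h0 htop ha n).trans
      (natCast_pow_four_mul_ofReal_exp_le (max_one_floor_div_log_le hc2 hn) hn1 t))
  simp only [Set.mem_compl_iff, Set.mem_ofPred_eq, not_le] at hω ⊢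
  have hγ : (c / 2) ^ 2 * ((n : ℝ) / Real.log n) ^ 2 ≤ (m : ℝ) ^ 2 := by
    rw [← mul_pow]
    refine pow_le_pow_left₀ (by positivity) (le_of_eq_of_le ?_ (half_le_max_one_floor _)) 2
    ring
  exact_mod_cast hω.trans_le hγ

/-- Let `C` be the interior of a convex body in the plane, and `A ⊇ 2C` a compact set.
For every `t > 0` there is `γ > 0`, depending only on `A`, `C` and `t`, such that for a
sample `X` of `n ≥ 2` independent uniformly distributed points in `A`, with probability
at least `1 - n^{-t}` the number of subsets of `X` induced by translates of `C`
contained in `A` with boundary missing `X` is at least `γ (n / log n)²`. -/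
theorem stmt18 (K : Set (ℝ × ℝ))
    (hKcomp : IsCompact K) (hKconv : Convex ℝ K) (hKint : (interior K).Nonempty)
    (C : Set (ℝ × ℝ)) (hC : C = interior K)
    (A : Set (ℝ × ℝ)) (hA : IsCompact A) (h2C : (fun c => (2 : ℝ) • c) '' C ⊆ A)
    (t : ℝ) (ht : 0 < t) :
    ∃ γ : ℝ, 0 < γ ∧ ∀ n : ℕ, 2 ≤ n →
      ENNReal.ofReal (1 - (n : ℝ) ^ (-t)) ≤
        (Measure.pi fun _ : Fin n => uniformOn A)
          {ω : Fin n → ℝ × ℝ |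
            γ * ((n : ℝ) / Real.log n) ^ 2 ≤ (rangeCountIn C A (Set.range ω) : ℝ)} := by
  subst hC
  obtain ⟨p, hp⟩ := hKint
  obtain ⟨r, hr, hball⟩ := Metric.isOpen_iff.1 isOpen_interior p hp
  have hCA : ∀ x ∈ interior K, translateSet x (interior K) ⊆ A := fun x hx =>
    translateSet_subset_of_two_smul_image_subset hKconv.interior h2C hx
  have h0 : volume A ≠ 0 := ((isOpen_interior.measure_pos volume ⟨p, hp⟩).trans_le
    ((measure_vadd volume p _).symm.trans_le (measure_mono (hCA p hp)))).ne'
  have htop : volume A ≠ ⊤ := hA.measure_lt_top.ne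
  have hV : 0 < (volume A).toReal := ENNReal.toReal_pos h0 htop
  set c := min (r ^ 2 / ((t + 4) * (volume A).toReal)) (Real.log 2)
  have hc0 : 0 < c := lt_min (by positivity) (Real.log_pos one_lt_two)
  have hc : c * ((t + 4) * (volume A).toReal) ≤ r ^ 2 :=
    (le_div_iff₀ (by positivity)).1 (min_le_left _ _)
  exact ⟨(c / 2) ^ 2, by positivity, fun n hn => ofReal_one_sub_rpow_le_measure_rangeCountIn
    hKconv.interior isOpen_interior (hKcomp.isBounded.subset interior_subset) hr hball hCA
    hA.measurableSet h0 htop ht hc0 hc (min_le_right _ _) hn⟩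
end
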